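/- Let (E^σ_m) ⊆ (F^σ_m) be an elementary injection of families of multifiltrations with parameters (k_0, σ_0, m_0), and let σ ∈ Σ be a cone having σ_0 as a proper face. For each ρ ∈ σ(1)∖σ_0(1) choose w_ρ ∈ M with ⟨w_ρ, u_ρ⟩ = 1 and ⟨w_ρ, u_{ρ'}⟩ = 0 for all other rays ρ' of σ, let a_ρ ∈ ℤ be the threshold of the pair (σ_0+ρ, m_0) (i.e. dim_ℂ F^{σ_0+ρ}_{m_0+i·w_ρ} = dim_ℂ E^{σ_0+ρ}_{m_0+i·w_ρ} + 1 iff i ≥ a_ρ), and set m_σ := m_0 + Σ_{ρ∈σ(1)∖σ_0(1)} a_ρ·w_ρ. Then for every m ∈ M with dim_ℂ F^σ_m = dim_ℂ E^σ_m + 1, one has m_σ ≤_σ m. -/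

import Mathlib

open Finset

namespace Toric

/-- Primitive ray generators of the fan of `ℙⁿ`: `u 0 = -(e₁+⋯+eₙ)` and `u (i+1) = e_{i+1}`. -/
def uGen (n : ℕ) : Fin (n + 1) → Fin n → ℤ :=
  Fin.cons (fun _ => -1) fun k => Pi.single k 1

/-- The duality pairing `⟨m, u_i⟩` for `m ∈ M = ℤⁿ`. -/
def pair (n : ℕ) (m : Fin n → ℤ) (i : Fin (n + 1)) : ℤ :=
  ∑ j, m j * uGen n i j

/-- A cone of the fan of `ℙⁿ`: a proper subset of the set `{0, …, n}` of rays. -/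
abbrev Cone (n : ℕ) : Type := {I : Finset (Fin (n + 1)) // I ≠ Finset.univ}

/-- `m ≤_σ m'`, i.e. `m' - m ∈ σ^∨`. -/
def dualLe (n : ℕ) (σ : Cone n) (m m' : Fin n → ℤ) : Prop :=
  ∀ i ∈ σ.1, 0 ≤ pair n (m' - m) i

/-- `m ∈ σ^⊥`. -/
def inPerp (n : ℕ) (σ : Cone n) (m : Fin n → ℤ) : Prop :=
  ∀ i ∈ σ.1, pair n m i = 0

/-- `m <_σ m'`, i.e. `m ≤_σ m'` and `m' - m ∉ σ^⊥`. -/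
def dualLt (n : ℕ) (σ : Cone n) (m m' : Fin n → ℤ) : Prop :=
  dualLe n σ m m' ∧ ¬ inPerp n σ (m' - m)

/-- A family of multifiltrations of the `ℂ`-vector space `V`, indexed by the cones of the fan
of `ℙⁿ` and the characters `m ∈ M`. -/
structure MultiFilt (n : ℕ) (V : Type) [AddCommGroup V] [Module ℂ V] : Type where
  E : Cone n → (Fin n → ℤ) → Submodule ℂ V
  mono : ∀ σ m m', dualLe n σ m m' → E σ m ≤ E σ m'
  top_of_empty : ∀ σ : Cone n, σ.1 = ∅ → ∀ m, E σ m = ⊤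
  chain_bot : ∀ (σ : Cone n) (ms : ℤ → Fin n → ℤ),
    (∀ i : ℤ, dualLt n σ (ms (i - 1)) (ms i)) →
    ∃ i₀ : ℤ, ∀ i ≤ i₀, E σ (ms i) = ⊥
  finite_support : ∃ S : Finset (Cone n × (Fin n → ℤ)), ∀ (σ : Cone n) (m : Fin n → ℤ),
    ¬ (E σ m : Set V) ⊆ (⋃ m' ∈ {m' | dualLt n σ m' m}, (E σ m' : Set V)) →
    ∃ q ∈ S, q.1 = σ ∧ inPerp n σ (m - q.2)
  facet_union : ∀ σ τ : Cone n, τ.1 ⊆ σ.1 → τ.1.card + 1 = σ.1.card →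
    ∀ mτ : Fin n → ℤ, dualLe n σ 0 mτ → inPerp n τ mτ →
    (∀ w : Fin n → ℤ, inPerp n τ w ↔ ∃ (v : Fin n → ℤ) (k : ℤ), inPerp n σ v ∧ w = v + k • mτ) →
    ∀ m, E τ m = ⨆ i : ℕ, E σ (m + (i : ℤ) • mτ)

/-- A pointwise injection `E ⊆ F` of families of multifiltrations is elementary with
parameters `(k₀, σ₀, m₀)`. -/
structure IsElementary {n : ℕ} {V : Type} [AddCommGroup V] [Module ℂ V]
    (E F : MultiFilt n V) (k₀ : ℕ) (σ₀ : Cone n) (m₀ : Fin n → ℤ) : Prop where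
  le : ∀ σ m, E.E σ m ≤ F.E σ m
  dim : σ₀.1.card = k₀
  eq_of_lt : ∀ σ m, σ.1.card < k₀ → E.E σ m = F.E σ m
  ne_iff : ∀ (σ : Cone n) (m : Fin n → ℤ), σ.1.card = k₀ →
    (E.E σ m ≠ F.E σ m ↔ σ = σ₀ ∧ inPerp n σ₀ (m - m₀))
  rank_step : Module.finrank ℂ (F.E σ₀ m₀) = Module.finrank ℂ (E.E σ₀ m₀) + 1
  eq_of_gt : ∀ σ m, k₀ < σ.1.card → ¬(σ₀.1 ⊂ σ.1 ∧ dualLe n σ₀ m m₀) → E.E σ m = F.E σ m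
  inf_of_gt : ∀ σ m, k₀ < σ.1.card → σ₀.1 ⊂ σ.1 → dualLe n σ₀ m m₀ →
    E.E σ m = F.E σ m ⊓ E.E σ₀ m₀



variable {n : ℕ}

lemma pair_sub' (m m' : Fin n → ℤ) (i : Fin (n+1)) :
    pair n (m - m') i = pair n m i - pair n m' i := by
  simp [pair, sub_mul, Finset.sum_sub_distrib]

lemma pair_add' (m m' : Fin n → ℤ) (i : Fin (n+1)) :
    pair n (m + m') i = pair n m i + pair n m' i := by
  simp [pair, add_mul, Finset.sum_add_distrib]

lemma pair_smul' (k : ℤ) (m : Fin n → ℤ) (i : Fin (n+1)) :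
    pair n (k • m) i = k * pair n m i := by
  simp [pair, Finset.mul_sum, mul_assoc]

lemma pair_zero' (i : Fin (n+1)) : pair n (0 : Fin n → ℤ) i = 0 := by simp [pair]

lemma pair_sum' {α : Type*} (s : Finset α) (f : α → Fin n → ℤ) (i : Fin (n+1)) :
    pair n (∑ ρ ∈ s, f ρ) i = ∑ ρ ∈ s, pair n (f ρ) i := by
  classical
  induction s using Finset.induction with
  | empty => simp [pair_zero']
  | insert _ _ h ih => simp [Finset.sum_insert h, pair_add', ih]

lemma pair_ray_zero (m : Fin n → ℤ) : pair n m 0 = -∑ j, m j := by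
  simp [pair, uGen]

lemma pair_ray_succ (m : Fin n → ℤ) (k : Fin n) : pair n m k.succ = m k := by
  simp [pair, uGen, Pi.single_apply]

/-- dual covectors: `cvec n (k+1) = e_k^*`, `cvec n 0 = 0`. -/
def cvec (n : ℕ) : Fin (n + 1) → Fin n → ℤ :=
  Fin.cons 0 fun k => Pi.single k 1

lemma pair_cvec_zero_left (i : Fin (n+1)) : pair n (cvec n 0) i = 0 := by
  simp [cvec, pair]

lemma pair_cvec_succ_zero (k : Fin n) : pair n (cvec n k.succ) 0 = -1 := by
  simp [cvec, pair_ray_zero]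

lemma pair_cvec_succ_succ (k l : Fin n) :
    pair n (cvec n k.succ) l.succ = if l = k then 1 else 0 := by
  simp [cvec, pair_ray_succ, Pi.single_apply]

lemma mtau_spec (ρ l : Fin (n+1)) (hne : l ≠ ρ) :
    pair n (cvec n ρ - cvec n l) ρ = 1 ∧
    ∀ i, i ≠ ρ → i ≠ l → pair n (cvec n ρ - cvec n l) i = 0 := by
  constructor
  · rw [pair_sub']
    rcases Fin.eq_zero_or_eq_succ ρ with hρ | ⟨k, hρ⟩
    · rcases Fin.eq_zero_or_eq_succ l with hl | ⟨j, hl⟩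
      · exact absurd (hl.trans hρ.symm) hne
      · subst hρ hl
        rw [pair_cvec_zero_left, pair_cvec_succ_zero]; ring
    · subst hρ
      rcases Fin.eq_zero_or_eq_succ l with hl | ⟨j, hl⟩
      · subst hl
        rw [pair_cvec_succ_succ, pair_cvec_zero_left]; simp
      · subst hl
        rw [pair_cvec_succ_succ, pair_cvec_succ_succ, if_pos rfl,
          if_neg (by intro hh; exact hne (by rw [hh]))]
        ring
  · intro i hiρ hil
    rw [pair_sub']
    rcases Fin.eq_zero_or_eq_succ i with hi | ⟨k, hi⟩
    · subst hi
      rcases Fin.eq_zero_or_eq_succ ρ with hρ | ⟨kρ, hρ⟩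
      · exact absurd hρ.symm hiρ
      rcases Fin.eq_zero_or_eq_succ l with hl | ⟨kl, hl⟩
      · exact absurd hl.symm hil
      subst hρ hl
      rw [pair_cvec_succ_zero, pair_cvec_succ_zero]; ring
    · subst hi
      have h1 : pair n (cvec n ρ) k.succ = 0 := by
        rcases Fin.eq_zero_or_eq_succ ρ with hρ | ⟨kρ, hρ⟩
        · subst hρ; exact pair_cvec_zero_left _
        · subst hρ; rw [pair_cvec_succ_succ, if_neg]
          intro hh; exact hiρ (by rw [hh])
      have h2 : pair n (cvec n l) k.succ = 0 := by
        rcases Fin.eq_zero_or_eq_succ l with hl | ⟨kl, hl⟩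
        · subst hl; exact pair_cvec_zero_left _
        · subst hl; rw [pair_cvec_succ_succ, if_neg]
          intro hh; exact hil (by rw [hh])
      rw [h1, h2]; ring

/-- For a face `τ` of a cone `σ`, `E σ m ≤ E τ m`. -/
lemma face_mono {V : Type} [AddCommGroup V] [Module ℂ V] (Mf : MultiFilt n V) :
    ∀ (σ τ : Cone n), τ.1 ⊆ σ.1 → ∀ m, Mf.E σ m ≤ Mf.E τ m := by
  suffices h : ∀ d (σ τ : Cone n), τ.1 ⊆ σ.1 → σ.1.card = τ.1.card + d →
      ∀ m, Mf.E σ m ≤ Mf.E τ m by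
    intro σ τ hsub m
    exact h (σ.1.card - τ.1.card) σ τ hsub
      (by have := Finset.card_le_card hsub; omega) m
  intro d
  induction d with
  | zero =>
    intro σ τ hsub hcard m
    have hτσ : τ = σ := Subtype.ext (Finset.eq_of_subset_of_card_le hsub (by omega))
    rw [hτσ]
  | succ d ih =>
    intro σ τ hsub hcard m
    obtain ⟨ρ, hρ⟩ : (σ.1 \ τ.1).Nonempty := by
      rw [Finset.sdiff_nonempty]
      intro hle
      have := Finset.card_le_card hle; omega
    rw [Finset.mem_sdiff] at hρ
    have hsub' : insert ρ τ.1 ⊆ σ.1 := Finset.insert_subset hρ.1 hsub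
    have hne : insert ρ τ.1 ≠ Finset.univ := by
      intro hu
      rw [hu] at hsub'
      exact σ.2 (Finset.univ_subset_iff.mp hsub')
    set σ' : Cone n := ⟨insert ρ τ.1, hne⟩ with hσ'
    have hcard' : σ'.1.card = τ.1.card + 1 := Finset.card_insert_of_notMem hρ.2
    have hIH : Mf.E σ m ≤ Mf.E σ' m := ih σ σ' hsub' (by omega) m
    obtain ⟨l, hl⟩ : ∃ l, l ∉ σ'.1 := by
      by_contra hc
      push_neg at hc
      exact σ'.2 (Finset.eq_univ_iff_forall.mpr hc)
    have hlρ : l ≠ ρ := fun he => hl (he ▸ Finset.mem_insert_self ρ τ.1)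
    obtain ⟨hm1, hm2⟩ := mtau_spec ρ l hlρ
    set mτ : Fin n → ℤ := cvec n ρ - cvec n l with hmτ
    have hmτ0 : ∀ i ∈ σ'.1, i ≠ ρ → pair n mτ i = 0 := fun i hi hiρ =>
      hm2 i hiρ (fun he => hl (he ▸ hi))
    have hfu := Mf.facet_union σ' τ (Finset.subset_insert ρ τ.1) hcard'.symm mτ
      (by
        intro i hi
        rw [sub_zero]
        by_cases hiρ : i = ρ
        · subst hiρ; rw [hm1]; norm_num
        · rw [hmτ0 i hi hiρ])
      (by
        intro i hi
        exact hmτ0 i (Finset.mem_insert_of_mem hi) (fun he => hρ.2 (he ▸ hi)))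
      (by
        intro w
        constructor
        · intro hwp
          refine ⟨w - pair n w ρ • mτ, pair n w ρ, ?_, by abel⟩
          intro i hi
          rw [pair_sub', pair_smul']
          rcases Finset.mem_insert.mp hi with hiρ | hiτ
          · subst hiρ; rw [hm1]; ring
          · rw [hwp i hiτ, hmτ0 i (Finset.mem_insert_of_mem hiτ)
              (fun he => hρ.2 (he ▸ hiτ))]
            ring
        · rintro ⟨v, k, hv, rfl⟩ i hi
          rw [pair_add', pair_smul', hv i (Finset.mem_insert_of_mem hi),
            hmτ0 i (Finset.mem_insert_of_mem hi) (fun he => hρ.2 (he ▸ hi))]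
          ring)
      m
    rw [hfu]
    refine le_trans hIH ?_
    have h0 := le_iSup (fun i : ℕ => Mf.E σ' (m + (i : ℤ) • mτ)) 0
    simpa using h0

/-- Lemma: localization of dimension jumps, `m_σ ≤_σ m`. -/
theorem stmt4 (n : ℕ) (V : Type) [AddCommGroup V] [Module ℂ V] [FiniteDimensional ℂ V]
    (E F : MultiFilt n V) (k₀ : ℕ) (σ₀ : Cone n) (m₀ : Fin n → ℤ)
    (h : IsElementary E F k₀ σ₀ m₀) (σ : Cone n) (hface : σ₀.1 ⊂ σ.1)
    (w : Fin (n + 1) → Fin n → ℤ) (a : Fin (n + 1) → ℤ)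
    (hw : ∀ ρ ∈ σ.1 \ σ₀.1, pair n (w ρ) ρ = 1 ∧ ∀ ρ' ∈ σ.1, ρ' ≠ ρ → pair n (w ρ) ρ' = 0)
    (ha : ∀ ρ ∈ σ.1 \ σ₀.1, ∀ τ : Cone n, τ.1 = insert ρ σ₀.1 →
      ∀ i : ℤ, (Module.finrank ℂ (F.E τ (m₀ + i • w ρ)) =
        Module.finrank ℂ (E.E τ (m₀ + i • w ρ)) + 1 ↔ a ρ ≤ i)) :
    ∀ m : Fin n → ℤ,
      Module.finrank ℂ (F.E σ m) = Module.finrank ℂ (E.E σ m) + 1 →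
      dualLe n σ (m₀ + ∑ ρ ∈ σ.1 \ σ₀.1, a ρ • w ρ) m := by
  intro m hm
  classical
  have hEF : E.E σ m ≤ F.E σ m := h.le σ m
  have hEneF : E.E σ m ≠ F.E σ m := by
    intro he
    rw [he] at hm; omega
  have hcard : k₀ < σ.1.card := h.dim ▸ Finset.card_lt_card hface
  have hle0 : dualLe n σ₀ m m₀ := by
    by_contra hnd
    exact hEneF (h.eq_of_gt σ m hcard (fun hc => hnd hc.2))
  have hinf : E.E σ m = F.E σ m ⊓ E.E σ₀ m₀ := h.inf_of_gt σ m hcard hface hle0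
  obtain ⟨v, hvF, hvE⟩ := SetLike.exists_of_lt (lt_of_le_of_ne hEF hEneF)
  have hvB : v ∉ E.E σ₀ m₀ := fun hb => hvE (hinf ▸ Submodule.mem_inf.mpr ⟨hvF, hb⟩)
  -- `m - m₀ ∈ σ₀^⊥`
  have hperp : inPerp n σ₀ (m - m₀) := by
    by_contra hnp
    have heq : E.E σ₀ m = F.E σ₀ m := by
      by_contra hne'
      exact hnp ((h.ne_iff σ₀ m h.dim).mp hne').2
    have hv1 : v ∈ F.E σ₀ m := face_mono F σ σ₀ hface.subset m hvF
    rw [← heq] at hv1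
    exact hvB (E.mono σ₀ m m₀ hle0 hv1)
  -- the key inequality on each new ray
  have key : ∀ ρ ∈ σ.1 \ σ₀.1, a ρ ≤ pair n (m - m₀) ρ := by
    intro ρ hρmem
    have hρ' := Finset.mem_sdiff.mp hρmem
    obtain ⟨hw1, hw2⟩ := hw ρ hρmem
    set j := pair n (m - m₀) ρ with hj
    have hτsub : insert ρ σ₀.1 ⊆ σ.1 := Finset.insert_subset hρ'.1 hface.subset
    have hτne : insert ρ σ₀.1 ≠ Finset.univ := by
      intro hu
      have hτsub2 := hτsub
      rw [hu] at hτsub2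
      exact σ.2 (Finset.univ_subset_iff.mp hτsub2)
    set τ : Cone n := ⟨insert ρ σ₀.1, hτne⟩ with hτ
    set m' := m₀ + j • w ρ with hm'
    have hpm' : ∀ i ∈ τ.1, pair n (m' - m) i = 0 := by
      intro i hi
      rw [hm', pair_sub', pair_add', pair_smul']
      rcases Finset.mem_insert.mp hi with hiρ | hiσ₀
      · subst hiρ
        have := pair_sub' m m₀ i
        rw [hw1]
        rw [hj, pair_sub'] at *
        omega
      · have h1 : pair n (w ρ) i = 0 :=
          hw2 i (hface.subset hiσ₀) (fun he => hρ'.2 (he ▸ hiσ₀))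
        have h2 := hperp i hiσ₀
        rw [pair_sub'] at h2
        rw [h1]
        omega
    have hdlττ : dualLe n τ m m' := fun i hi => le_of_eq (hpm' i hi).symm
    have hdl₀ : dualLe n σ₀ m' m₀ := by
      intro i hi
      have h1 : pair n (w ρ) i = 0 :=
        hw2 i (hface.subset hi) (fun he => hρ'.2 (he ▸ hi))
      rw [pair_sub', hm', pair_add', pair_smul', h1]
      omega
    have hcards : τ.1.card = k₀ + 1 := by
      rw [hτ]
      simp only
      rw [Finset.card_insert_of_notMem hρ'.2, h.dim]
    have hfaceτ : σ₀.1 ⊂ τ.1 := Finset.ssubset_insert hρ'.2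
    have hinfτ : E.E τ m' = F.E τ m' ⊓ E.E σ₀ m₀ :=
      h.inf_of_gt τ m' (by omega) hfaceτ hdl₀
    have hFτle : F.E τ m' ≤ F.E σ₀ m₀ :=
      le_trans (face_mono F τ σ₀ hfaceτ.subset m') (F.mono σ₀ m' m₀ hdl₀)
    have hneτ : E.E τ m' ≠ F.E τ m' := by
      intro heq
      have hle' : F.E τ m' ≤ E.E σ₀ m₀ := by
        rw [← heq, hinfτ]; exact inf_le_right
      exact hvB (hle' (F.mono τ m m' hdlττ (face_mono F σ τ hτsub m hvF)))
    -- dimension count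
    have hABne : ¬ F.E τ m' ≤ E.E σ₀ m₀ := fun hAB =>
      hneτ (le_antisymm (h.le τ m') (hinfτ ▸ le_inf le_rfl hAB))
    have hBlt : E.E σ₀ m₀ < F.E τ m' ⊔ E.E σ₀ m₀ :=
      lt_of_le_of_ne le_sup_right (fun he => hABne (he ▸ le_sup_left))
    have hsupC : F.E τ m' ⊔ E.E σ₀ m₀ ≤ F.E σ₀ m₀ := sup_le hFτle (h.le σ₀ m₀)
    have d1 : Module.finrank ℂ (E.E σ₀ m₀) < Module.finrank ℂ (F.E τ m' ⊔ E.E σ₀ m₀ : Submodule ℂ V) :=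
      Submodule.finrank_lt_finrank_of_lt hBlt
    have d2 : Module.finrank ℂ (F.E τ m' ⊔ E.E σ₀ m₀ : Submodule ℂ V) ≤ Module.finrank ℂ (F.E σ₀ m₀) :=
      Submodule.finrank_mono hsupC
    have hd := Submodule.finrank_sup_add_finrank_inf_eq (F.E τ m') (E.E σ₀ m₀)
    rw [← hinfτ] at hd
    have hrk := h.rank_step
    have hfr : Module.finrank ℂ (F.E τ m') = Module.finrank ℂ (E.E τ m') + 1 := by omega
    exact ((ha ρ hρmem τ rfl j).mp hfr)
  -- conclude
  intro i hi
  rw [pair_sub', pair_add', pair_sum']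
  simp only [pair_smul']
  by_cases hi0 : i ∈ σ₀.1
  · have hsum0 : ∑ ρ ∈ σ.1 \ σ₀.1, a ρ * pair n (w ρ) i = 0 :=
      Finset.sum_eq_zero (fun ρ hρ => by
        rw [(hw ρ hρ).2 i hi (fun he => (Finset.mem_sdiff.mp hρ).2 (he ▸ hi0))]
        ring)
    have h2 := hperp i hi0
    rw [pair_sub'] at h2
    omega
  · have himem : i ∈ σ.1 \ σ₀.1 := Finset.mem_sdiff.mpr ⟨hi, hi0⟩
    have hsum : ∑ ρ ∈ σ.1 \ σ₀.1, a ρ * pair n (w ρ) i = a i := by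
      rw [Finset.sum_eq_single_of_mem i himem
        (fun ρ hρ hne => by rw [(hw ρ hρ).2 i hi (fun he => hne he.symm)]; ring)]
      rw [(hw i himem).1]; ring
    have hk := key i himem
    rw [pair_sub'] at hk
    omega


end Toric
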